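/- arXiv:2110.14062 — 3 statements merged into one kernel-verified Lean document; each statement's English description precedes it below -/
import Mathlib

section
/- Let P ⊆ ℝⁿ be a polytope and v ∈ ℝⁿ such that (P,v) is quasi-positively oriented. Then for every z ∈ P the function φ(x,y) = ⟨x−y, v⟩ attains its minimum on the fiber π⁻¹(z) = {(x,y) ∈ P×P : x+y = 2z} at the unique point (bot(P∩ρ_zP), top(P∩ρ_zP)); the resulting section Δ_{(P,v)} : z ↦ (bot(P∩ρ_zP), top(P∩ρ_zP)) of π agrees with the set-theoretic diagonal z ↦ (z,z) on the vertices of P and is homotopic to it, via the homotopy H(z,t) = (1−t)(z,z) + t·Δ_{(P,v)}(z). -/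
/-!
Since `x ↦ 2z - x` maps `Q z = P ∩ ρ_z P` onto itself and reverses `⟨-, v⟩`, we get
`top (Q z) = 2z - bot (Q z)`; the fibre `π⁻¹(z)` is `{(x, 2z - x) : x ∈ Q z}`, on which
`φ(x, 2z - x) = 2⟨x, v⟩ - 2⟨z, v⟩` is minimised exactly at `x = bot (Q z)`. At a vertex `Q z = {z}`,
and the homotopy stays in `P × P` by convexity.

Continuity of `z ↦ bot (Q z)` follows from uniqueness of the minimiser once `Q` is lower
hemicontinuous, and this is where `P` being a polytope matters: a polytope is locally a cone at
each of its points (being a linear image of a standard simplex, which visibly is), so a point `z`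
of `P` near `z₀` is `z₀ + t (u - z₀)` with `u ∈ P` and `t` small, and then `y + t (u - y) ∈ Q z`
approximates any given `y ∈ Q z₀`.
-/

open scoped BigOperators

noncomputable section

/-- Vectors in `ℝⁿ`. -/
abbrev Vec (n : ℕ) := Fin n → ℝ

/-- The standard scalar product on `ℝⁿ`. -/
def dot {n : ℕ} (x y : Vec n) : ℝ := ∑ i, x i * y i

/-- A polytope is the convex hull of a finite set of points. -/
def IsPolytope {n : ℕ} (P : Set (Vec n)) : Prop :=
  ∃ S : Finset (Vec n), P = convexHull ℝ (S : Set (Vec n))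

/-- A face of `P`: either `P` itself (take `c = 0`) or the subset of `P` where some linear
functional attains its maximum over `P`. -/
def IsFace {n : ℕ} (P F : Set (Vec n)) : Prop :=
  ∃ c : Vec n, F = {x ∈ P | ∀ y ∈ P, dot c y ≤ dot c x}

/-- Dimension of a subset of `ℝⁿ`: the rank of the direction of its affine span. -/
noncomputable def sdim {n : ℕ} (A : Set (Vec n)) : ℕ :=
  Module.finrank ℝ (affineSpan ℝ A).direction

/-- The normal cone of a face `F` of `P`. -/
def normalCone {n : ℕ} (P F : Set (Vec n)) : Set (Vec n) :=
  {c | F ⊆ {x ∈ P | ∀ y ∈ P, dot c y ≤ dot c x}}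

/-- `coneOf X`: nonnegative linear combinations of finitely many elements of `X`. -/
def coneOf {n : ℕ} (X : Set (Vec n)) : Set (Vec n) :=
  {v | ∃ (k : ℕ) (x : Fin k → Vec n) (l : Fin k → ℝ),
      (∀ i, x i ∈ X) ∧ (∀ i, 0 ≤ l i) ∧ v = ∑ i, l i • x i}

/-- The reflection `ρ_z P = 2z - P` of `P` with respect to `z`. -/
def reflP {n : ℕ} (z : Vec n) (P : Set (Vec n)) : Set (Vec n) :=
  (fun x => (2 : ℝ) • z - x) '' P

/-- An edge is a 1-dimensional face. -/
def IsEdge {n : ℕ} (P E : Set (Vec n)) : Prop := IsFace P E ∧ sdim E = 1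

/-- `(P, v)` is oriented if `v` is not perpendicular to any edge of `P`. -/
def Oriented {n : ℕ} (P : Set (Vec n)) (v : Vec n) : Prop :=
  ∀ E, IsEdge P E → ∀ d ∈ (affineSpan ℝ E).direction, d ≠ 0 → dot d v ≠ 0

/-- `(P, v)` is positively oriented if `(P ∩ ρ_z P, v)` is oriented for every `z ∈ P`. -/
def PosOriented {n : ℕ} (P : Set (Vec n)) (v : Vec n) : Prop :=
  ∀ z ∈ P, Oriented (P ∩ reflP z P) v

/-- `x` is the minimizer of `⟨-, v⟩` on `P`. -/
def IsBotOf {n : ℕ} (P : Set (Vec n)) (v x : Vec n) : Prop :=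
  x ∈ P ∧ ∀ y ∈ P, dot v x ≤ dot v y

/-- `x` is the maximizer of `⟨-, v⟩` on `P`. -/
def IsTopOf {n : ℕ} (P : Set (Vec n)) (v x : Vec n) : Prop :=
  x ∈ P ∧ ∀ y ∈ P, dot v y ≤ dot v x

/-- `(P, v)` is quasi-oriented if `⟨-, v⟩` has a unique minimizer and a unique maximizer on `P`. -/
def QuasiOriented {n : ℕ} (P : Set (Vec n)) (v : Vec n) : Prop :=
  (∃! x, IsBotOf P v x) ∧ (∃! x, IsTopOf P v x)

/-- `(P, v)` is quasi-positively oriented if `(P ∩ ρ_z P, v)` is quasi-oriented for all `z ∈ P`. -/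
def QuasiPosOriented {n : ℕ} (P : Set (Vec n)) (v : Vec n) : Prop :=
  ∀ z ∈ P, QuasiOriented (P ∩ reflP z P) v

/-- The polytope `P^φ = π^φ(P × P) ⊆ ℝ^{n+1}`, where `π^φ(x,y) = ((x+y)/2, ⟨x - y, v⟩)`. -/
def Pphi {n : ℕ} (P : Set (Vec n)) (v : Vec n) : Set (Vec (n + 1)) :=
  {w | ∃ x ∈ P, ∃ y ∈ P, w = Fin.snoc ((1 / 2 : ℝ) • (x + y)) (dot (x - y) v)}

/-- The pair of faces `(F, G)` belongs to `F^φ`: there are no `x ∈ F`, `y ∈ G`, `λ > 0` with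
`(π(x,y), φ(x,y) - λ) ∈ P^φ`. -/
def InFphi {n : ℕ} (P : Set (Vec n)) (v : Vec n) (F G : Set (Vec n)) : Prop :=
  ¬ ∃ x ∈ F, ∃ y ∈ G, ∃ lam : ℝ, 0 < lam ∧
      (Fin.snoc ((1 / 2 : ℝ) • (x + y)) (dot (x - y) v - lam) : Vec (n + 1)) ∈ Pphi P v

/-- The set `(A + B)/2`. -/
def avgSet {n : ℕ} (A B : Set (Vec n)) : Set (Vec n) :=
  {z | ∃ x ∈ A, ∃ y ∈ B, z = (1 / 2 : ℝ) • (x + y)}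

/-- The coherent subdivision `π(F^φ)` is tight. -/
def TightSub {n : ℕ} (P : Set (Vec n)) (v : Vec n) : Prop :=
  ∀ F G : Set (Vec n), IsFace P F → IsFace P G → F.Nonempty → G.Nonempty →
    InFphi P v F G → sdim F + sdim G = sdim (avgSet F G)

/-- `d` is a direction of an edge of `P ∩ ρ_z P` for some `z ∈ P`; the hyperplanes of the
fundamental hyperplane arrangement `H_P` are the orthogonal complements of such directions. -/
def EdgeDir {n : ℕ} (P : Set (Vec n)) (d : Vec n) : Prop :=
  d ≠ 0 ∧ ∃ z ∈ P, ∃ E, IsEdge (P ∩ reflP z P) E ∧ d ∈ (affineSpan ℝ E).direction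

/-- The cone `cone(-N_P(F) ∪ N_P(G))`. -/
def diagCone {n : ℕ} (P F G : Set (Vec n)) : Set (Vec n) :=
  coneOf ((Neg.neg '' normalCone P F) ∪ normalCone P G)


/-- The point of `P` minimizing `⟨-, v⟩` (when it exists and is unique). -/
noncomputable def botPt {n : ℕ} (P : Set (Vec n)) (v : Vec n) : Vec n :=
  Classical.epsilon (IsBotOf P v)

/-- The point of `P` maximizing `⟨-, v⟩` (when it exists and is unique). -/
noncomputable def topPt {n : ℕ} (P : Set (Vec n)) (v : Vec n) : Vec n :=
  Classical.epsilon (IsTopOf P v)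

open Filter Topology

section LocallyConic

variable {E F : Type*} [AddCommGroup E] [Module ℝ E] [TopologicalSpace E]
  [AddCommGroup F] [Module ℝ F] [TopologicalSpace F]

def LocallyConicAt (K : Set E) (z : E) : Prop :=
  ∀ t : ℝ, 0 < t → ∀ᶠ p in 𝓝[K] z, ∃ w ∈ K, AffineMap.lineMap z w t = p

theorem locallyConicAt_stdSimplex {ι : Type*} [Fintype ι] {μ : ι → ℝ}
    (hμ : μ ∈ stdSimplex ℝ ι) : LocallyConicAt (stdSimplex ℝ ι) μ := by
  intro t ht
  have hcoord : ∀ i, ∀ᶠ ν in 𝓝[stdSimplex ℝ ι] μ, (1 - t) * μ i ≤ ν i := by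
    intro i
    rcases (hμ.1 i).eq_or_lt with hi | hi
    · filter_upwards [self_mem_nhdsWithin] with ν hν
      simpa [← hi] using hν.1 i
    · refine eventually_nhdsWithin_of_eventually_nhds ?_
      exact ((continuous_apply i).tendsto μ).eventually
        (eventually_ge_nhds (by nlinarith))
  -- `μ + t⁻¹ • (ν - μ)` has nonnegative coordinates exactly when `(1 - t) * μ i ≤ ν i` for all `i`.
  filter_upwards [eventually_all.2 hcoord, self_mem_nhdsWithin] with ν hν hνΔ
  refine ⟨μ + t⁻¹ • (ν - μ), ⟨fun i => ?_, ?_⟩, ?_⟩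
  · have := hν i
    simp only [Pi.add_apply, Pi.smul_apply, Pi.sub_apply, smul_eq_mul]
    rw [← mul_le_mul_iff_of_pos_left ht, mul_zero, mul_add, ← mul_assoc, mul_inv_cancel₀ ht.ne']
    linarith
  · simp [Finset.sum_add_distrib, ← Finset.mul_sum, hμ.2, hνΔ.2]
  · rw [AffineMap.lineMap_apply_module', add_sub_cancel_left, smul_inv_smul₀ ht.ne', sub_add_cancel]

theorem LocallyConicAt.image [T2Space F] {K : Set E} (hK : IsCompact K)
    (hKc : ∀ μ ∈ K, LocallyConicAt K μ) {f : E →ᵃ[ℝ] F} (hf : Continuous f) {z : F}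
    (hz : z ∈ f '' K) : LocallyConicAt (f '' K) z := by
  intro t ht
  set N := ⋃ μ ∈ K ∩ f ⁻¹' {z},
    interior {ν | ν ∈ K → ∃ w ∈ K, AffineMap.lineMap μ w t = ν}
  have hNo : IsOpen N := isOpen_biUnion fun _ _ => isOpen_interior
  -- By compactness, the points of `K` outside `N` have images bounded away from `z`.
  have hfar : IsClosed (f '' (K \ N)) := ((hK.diff hNo).image hf).isClosed
  have hz' : z ∉ f '' (K \ N) := by
    rintro ⟨μ, ⟨hμK, hμN⟩, rfl⟩
    refine hμN (Set.mem_biUnion ⟨hμK, rfl⟩ (mem_interior_iff_mem_nhds.2 ?_))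
    exact mem_nhdsWithin_iff_eventually.1 (hKc μ hμK t ht)
  filter_upwards [nhdsWithin_le_nhds (hfar.isOpen_compl.mem_nhds hz'), self_mem_nhdsWithin]
    with p hpN hp
  obtain ⟨ν, hνK, rfl⟩ := hp
  have hνN : ν ∈ N := by_contra fun h => hpN ⟨ν, ⟨hνK, h⟩, rfl⟩
  obtain ⟨μ, ⟨hμK, rfl⟩, hνμ⟩ := Set.mem_iUnion₂.1 hνN
  obtain ⟨w, hwK, rfl⟩ := interior_subset hνμ hνK
  exact ⟨f w, ⟨w, hwK, rfl⟩, (AffineMap.apply_lineMap f μ w t).symm⟩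

theorem locallyConicAt_convexHull [IsTopologicalAddGroup E] [ContinuousSMul ℝ E] [T2Space E]
    {s : Set E} (hs : s.Finite) {z : E} (hz : z ∈ convexHull ℝ s) :
    LocallyConicAt (convexHull ℝ s) z := by
  have hK := hs.convexHull_eq_image (R := ℝ)
  let _ : Fintype s := hs.fintype
  set L : (s → ℝ) →ₗ[ℝ] E := ∑ x : s, (LinearMap.proj x).smulRight x.1
  change convexHull ℝ s = L '' stdSimplex ℝ s at hK
  rw [hK] at hz ⊢
  exact LocallyConicAt.image (isCompact_stdSimplex ℝ s)
    (fun μ hμ => locallyConicAt_stdSimplex hμ) (f := L.toAffineMap)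
    (LinearMap.continuous_on_pi L) hz

end LocallyConic

section ReflectedIntersection

variable {n : ℕ} {P : Set (Vec n)} {v z : Vec n}

theorem sub_dot_eq (x y v : Vec n) : dot (x - y) v = dot v x - dot v y := by
  change (x - y) ⬝ᵥ v = v ⬝ᵥ x - v ⬝ᵥ y
  rw [sub_dotProduct, dotProduct_comm x, dotProduct_comm y]

theorem dot_two_smul_sub (v z x : Vec n) :
    dot v ((2 : ℝ) • z - x) = 2 * dot v z - dot v x := by
  change v ⬝ᵥ ((2 : ℝ) • z - x) = 2 * v ⬝ᵥ z - v ⬝ᵥ x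
  rw [dotProduct_sub, dotProduct_smul, smul_eq_mul]

theorem dot_lineMap (v a b : Vec n) (t : ℝ) :
    dot v (AffineMap.lineMap a b t) = dot v a + t * (dot v b - dot v a) := by
  change v ⬝ᵥ (AffineMap.lineMap a b t) = v ⬝ᵥ a + t * (v ⬝ᵥ b - v ⬝ᵥ a)
  rw [AffineMap.lineMap_apply_module, dotProduct_add, dotProduct_smul, dotProduct_smul,
    smul_eq_mul, smul_eq_mul]
  ring

theorem continuous_dot (v : Vec n) : Continuous (dot v) :=
  continuous_const.dotProduct continuous_id

theorem mem_inter_reflP_iff {x : Vec n} :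
    x ∈ P ∩ reflP z P ↔ x ∈ P ∧ (2 : ℝ) • z - x ∈ P := by
  refine and_congr_right fun _ => ⟨?_, fun h => ⟨_, h, sub_sub_cancel _ _⟩⟩
  rintro ⟨y, hy, rfl⟩
  rwa [sub_sub_cancel]

theorem two_smul_sub_mem_inter_reflP {x : Vec n} (hx : x ∈ P ∩ reflP z P) :
    (2 : ℝ) • z - x ∈ P ∩ reflP z P := by
  rw [mem_inter_reflP_iff, sub_sub_cancel] at *
  exact hx.symm

theorem mem_inter_reflP_of_add_eq {x y : Vec n} (hx : x ∈ P) (hy : y ∈ P)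
    (hxy : x + y = (2 : ℝ) • z) : x ∈ P ∩ reflP z P :=
  mem_inter_reflP_iff.2 ⟨hx, by rwa [← hxy, add_sub_cancel_left]⟩

theorem isBotOf_botPt (h : ∃ x, IsBotOf P v x) : IsBotOf P v (botPt P v) :=
  Classical.epsilon_spec h

theorem isTopOf_topPt (h : ∃ x, IsTopOf P v x) : IsTopOf P v (topPt P v) :=
  Classical.epsilon_spec h

theorem botPt_singleton : botPt {z} v = z :=
  (Classical.epsilon_spec (p := IsBotOf {z} v) ⟨z, rfl, fun _ hy => hy ▸ le_rfl⟩).1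

theorem topPt_singleton : topPt {z} v = z :=
  (Classical.epsilon_spec (p := IsTopOf {z} v) ⟨z, rfl, fun _ hy => hy ▸ le_rfl⟩).1

theorem IsBotOf.isTopOf_two_smul_sub {b : Vec n} (hb : IsBotOf (P ∩ reflP z P) v b) :
    IsTopOf (P ∩ reflP z P) v ((2 : ℝ) • z - b) := by
  refine ⟨two_smul_sub_mem_inter_reflP hb.1, fun y hy => ?_⟩
  have := hb.2 _ (two_smul_sub_mem_inter_reflP hy)
  rw [dot_two_smul_sub] at this ⊢
  linarith

theorem topPt_eq_two_smul_sub_botPt (h : QuasiOriented (P ∩ reflP z P) v) :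
    topPt (P ∩ reflP z P) v = (2 : ℝ) • z - botPt (P ∩ reflP z P) v :=
  h.2.unique (isTopOf_topPt h.2.exists) (isBotOf_botPt h.1.exists).isTopOf_two_smul_sub

theorem botPt_add_topPt (h : QuasiOriented (P ∩ reflP z P) v) :
    botPt (P ∩ reflP z P) v + topPt (P ∩ reflP z P) v = (2 : ℝ) • z := by
  rw [topPt_eq_two_smul_sub_botPt h, add_sub_cancel]

theorem dot_botPt_sub_topPt_le (h : QuasiOriented (P ∩ reflP z P) v) {x y : Vec n}
    (hx : x ∈ P) (hy : y ∈ P) (hxy : x + y = (2 : ℝ) • z) :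
    dot (botPt (P ∩ reflP z P) v - topPt (P ∩ reflP z P) v) v ≤ dot (x - y) v := by
  have hxQ := mem_inter_reflP_of_add_eq hx hy hxy
  have hyQ := mem_inter_reflP_of_add_eq hy hx ((add_comm y x).trans hxy)
  rw [sub_dot_eq, sub_dot_eq]
  linarith [(isBotOf_botPt h.1.exists).2 x hxQ, (isTopOf_topPt h.2.exists).2 y hyQ]

theorem eq_botPt_and_eq_topPt_of_dot_eq (h : QuasiOriented (P ∩ reflP z P) v) {x y : Vec n}
    (hx : x ∈ P) (hy : y ∈ P) (hxy : x + y = (2 : ℝ) • z)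
    (heq : dot (x - y) v = dot (botPt (P ∩ reflP z P) v - topPt (P ∩ reflP z P) v) v) :
    x = botPt (P ∩ reflP z P) v ∧ y = topPt (P ∩ reflP z P) v := by
  have hxQ := mem_inter_reflP_of_add_eq hx hy hxy
  have hyQ := mem_inter_reflP_of_add_eq hy hx ((add_comm y x).trans hxy)
  have hbot := isBotOf_botPt h.1.exists
  have htop := isTopOf_topPt h.2.exists
  rw [sub_dot_eq, sub_dot_eq] at heq
  refine ⟨h.1.unique ⟨hxQ, fun w hw => ?_⟩ hbot, h.2.unique ⟨hyQ, fun w hw => ?_⟩ htop⟩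
  · linarith [hbot.2 w hw, htop.2 y hyQ]
  · linarith [htop.2 w hw, hbot.2 x hxQ]

theorem inter_reflP_eq_singleton_of_isFace (h : IsFace P {z}) : P ∩ reflP z P = {z} := by
  obtain ⟨c, hc⟩ := h
  have hz : z ∈ P ∧ ∀ y ∈ P, dot c y ≤ dot c z := hc.subset rfl
  ext x
  refine ⟨fun hx => ?_, ?_⟩
  · obtain ⟨hxP, hx'P⟩ := mem_inter_reflP_iff.1 hx
    have := hz.2 _ hx'P
    rw [dot_two_smul_sub] at this
    refine hc.symm.subset ⟨hxP, fun y hy => ?_⟩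
    linarith [hz.2 y hy, hz.2 x hxP]
  · rintro rfl
    refine mem_inter_reflP_iff.2 ⟨hz.1, ?_⟩
    rw [two_smul, add_sub_cancel_right]
    exact hz.1

end ReflectedIntersection

section Continuity

variable {n : ℕ} {P : Set (Vec n)} {v : Vec n}

theorem eventually_exists_mem_inter_reflP_dot_le (hconv : Convex ℝ P)
    (hbdd : BddAbove (dot v '' P)) {z₀ y : Vec n} (hz₀ : LocallyConicAt P z₀)
    (hy : y ∈ P ∩ reflP z₀ P) {ε : ℝ} (hε : 0 < ε) :
    ∀ᶠ z in 𝓝[P] z₀, ∃ x ∈ P ∩ reflP z P, dot v x ≤ dot v y + ε := by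
  obtain ⟨M, hM⟩ := hbdd
  have hyM : dot v y ≤ M := hM ⟨y, hy.1, rfl⟩
  obtain ⟨hyP, hy'P⟩ := mem_inter_reflP_iff.1 hy
  set t := ε / (M - dot v y + ε)
  have ht : 0 < t := by positivity
  have ht1 : t ≤ 1 := (div_le_one (by linarith)).2 (by linarith)
  filter_upwards [hz₀ t ht] with z hz
  obtain ⟨u, hu, rfl⟩ := hz
  -- Moving `y` towards `u` by the same ratio as `z₀` keeps it in `P ∩ reflP z P`.
  refine ⟨AffineMap.lineMap y u t, mem_inter_reflP_iff.2 ⟨?_, ?_⟩, ?_⟩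
  · exact hconv.lineMap_mem hyP hu ⟨ht.le, ht1⟩
  · have : (2 : ℝ) • AffineMap.lineMap z₀ u t - AffineMap.lineMap y u t =
        AffineMap.lineMap ((2 : ℝ) • z₀ - y) u t := by
      simp only [AffineMap.lineMap_apply_module]
      module
    rw [this]
    exact hconv.lineMap_mem hy'P hu ⟨ht.le, ht1⟩
  · have hut : t * (dot v u - dot v y) ≤ ε :=
      calc t * (dot v u - dot v y) ≤ t * (M - dot v y + ε) :=
            mul_le_mul_of_nonneg_left (by linarith [hM ⟨u, hu, rfl⟩]) ht.le
        _ = ε := div_mul_cancel₀ _ (by linarith)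
    rw [dot_lineMap]
    linarith

theorem isBotOf_of_tendsto (hP : IsCompact P) (hconv : Convex ℝ P) {z₀ : Vec n}
    (hz₀ : LocallyConicAt P z₀) {l : Filter (Vec n)} [l.NeBot] (hl : l ≤ 𝓝[P] z₀)
    {g : Vec n → Vec n} (hg : ∀ᶠ z in l, IsBotOf (P ∩ reflP z P) v (g z)) {b : Vec n}
    (hb : Tendsto g l (𝓝 b)) : IsBotOf (P ∩ reflP z₀ P) v b := by
  have hz : Tendsto id l (𝓝 z₀) := hl.trans nhdsWithin_le_nhds
  refine ⟨mem_inter_reflP_iff.2 ⟨?_, ?_⟩, fun y hy => le_of_forall_pos_le_add fun ε hε => ?_⟩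
  · exact hP.isClosed.mem_of_tendsto hb (hg.mono fun z h => h.1.1)
  · exact hP.isClosed.mem_of_tendsto ((hz.const_smul (2 : ℝ)).sub hb)
      (hg.mono fun z h => (mem_inter_reflP_iff.1 h.1).2)
  · have hnear : ∀ᶠ z in l, ∃ x ∈ P ∩ reflP z P, dot v x ≤ dot v y + ε :=
      hl (eventually_exists_mem_inter_reflP_dot_le hconv
        (hP.image (continuous_dot v)).bddAbove hz₀ hy hε)
    exact le_of_tendsto (((continuous_dot v).tendsto b).comp hb)
      ((hnear.and hg).mono fun z ⟨⟨x, hx, hxy⟩, hgz⟩ => (hgz.2 x hx).trans hxy)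

theorem continuousOn_botPt_inter_reflP (hP : IsCompact P) (hconv : Convex ℝ P)
    (hconic : ∀ z ∈ P, LocallyConicAt P z) (hqpo : QuasiPosOriented P v) :
    ContinuousOn (fun z => botPt (P ∩ reflP z P) v) P := by
  intro z₀ hz₀
  have hbot : ∀ᶠ z in 𝓝[P] z₀, IsBotOf (P ∩ reflP z P) v (botPt (P ∩ reflP z P) v) :=
    eventually_mem_nhdsWithin.mono fun z hz => isBotOf_botPt (hqpo z hz).1.exists
  refine hP.tendsto_nhds_of_unique_mapClusterPt (hbot.mono fun z h => h.1.1) fun b _ hb => ?_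
  obtain ⟨U, hU, hUb⟩ := mapClusterPt_iff_ultrafilter.1 hb
  exact (hqpo z₀ hz₀).1.unique (isBotOf_of_tendsto hP hconv (hconic z₀ hz₀) hU (hU hbot) hUb)
    (isBotOf_botPt (hqpo z₀ hz₀).1.exists)

theorem continuousOn_straightLineHomotopy {X : Type*} [TopologicalSpace X] [AddCommGroup X]
    [Module ℝ X] [ContinuousAdd X] [ContinuousSMul ℝ X] {s : Set X} {T : Set ℝ} {f : X → X}
    (hf : ContinuousOn f s) :
    ContinuousOn (fun p : X × ℝ => (1 - p.2) • p.1 + p.2 • f p.1) (s ×ˢ T) :=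
  ((continuousOn_const.sub continuousOn_snd).smul continuousOn_fst).add
    (continuousOn_snd.smul (hf.comp continuousOn_fst fun _ hp => hp.1))

end Continuity

theorem IsPolytope.isCompact {n : ℕ} {P : Set (Vec n)} (hP : IsPolytope P) : IsCompact P := by
  obtain ⟨S, rfl⟩ := hP
  exact S.finite_toSet.isCompact_convexHull ℝ

theorem IsPolytope.convex {n : ℕ} {P : Set (Vec n)} (hP : IsPolytope P) : Convex ℝ P := by
  obtain ⟨S, rfl⟩ := hP
  exact convex_convexHull ℝ _

theorem IsPolytope.locallyConicAt {n : ℕ} {P : Set (Vec n)} (hP : IsPolytope P) {z : Vec n}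
    (hz : z ∈ P) : LocallyConicAt P z := by
  obtain ⟨S, rfl⟩ := hP
  exact locallyConicAt_convexHull S.finite_toSet hz

/-- Bot-top diagonal. For a quasi-positively oriented polytope `(P, v)` and
every `z ∈ P`, the function `φ(x,y) = ⟨x - y, v⟩` attains its minimum on the fiber
`π⁻¹(z) = {(x,y) ∈ P × P : x + y = 2z}` at the unique point
`(bot(P ∩ ρ_z P), top(P ∩ ρ_z P))`; the resulting section `Δ_{(P,v)}` agrees with the
set-theoretic diagonal on the vertices of `P` and is homotopic to it via
`H(z,t) = (1-t)(z,z) + t Δ_{(P,v)}(z)`. -/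
theorem stmt0 {n : ℕ} (P : Set (Vec n)) (v : Vec n)
    (hP : IsPolytope P) (hqpo : QuasiPosOriented P v) :
    (∀ z ∈ P,
      IsBotOf (P ∩ reflP z P) v (botPt (P ∩ reflP z P) v) ∧
      IsTopOf (P ∩ reflP z P) v (topPt (P ∩ reflP z P) v) ∧
      botPt (P ∩ reflP z P) v ∈ P ∧ topPt (P ∩ reflP z P) v ∈ P ∧
      botPt (P ∩ reflP z P) v + topPt (P ∩ reflP z P) v = (2 : ℝ) • z ∧
      (∀ x ∈ P, ∀ y ∈ P, x + y = (2 : ℝ) • z →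
        dot (botPt (P ∩ reflP z P) v - topPt (P ∩ reflP z P) v) v ≤ dot (x - y) v ∧
        (dot (x - y) v = dot (botPt (P ∩ reflP z P) v - topPt (P ∩ reflP z P) v) v →
          x = botPt (P ∩ reflP z P) v ∧ y = topPt (P ∩ reflP z P) v))) ∧
    (∀ z, IsFace P {z} →
      botPt (P ∩ reflP z P) v = z ∧ topPt (P ∩ reflP z P) v = z) ∧
    (∀ p : Vec n × ℝ, p ∈ P ×ˢ Set.Icc (0 : ℝ) 1 →
      ((1 - p.2) • p.1 + p.2 • botPt (P ∩ reflP p.1 P) v,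
       (1 - p.2) • p.1 + p.2 • topPt (P ∩ reflP p.1 P) v) ∈ P ×ˢ P) ∧
    ContinuousOn (fun p : Vec n × ℝ =>
        (((1 - p.2) • p.1 + p.2 • botPt (P ∩ reflP p.1 P) v,
          (1 - p.2) • p.1 + p.2 • topPt (P ∩ reflP p.1 P) v) : Vec n × Vec n))
      (P ×ˢ Set.Icc (0 : ℝ) 1) ∧
    (∀ z ∈ P,
      ((1 - (0 : ℝ)) • z + (0 : ℝ) • botPt (P ∩ reflP z P) v,
       (1 - (0 : ℝ)) • z + (0 : ℝ) • topPt (P ∩ reflP z P) v) = (z, z) ∧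
      ((1 - (1 : ℝ)) • z + (1 : ℝ) • botPt (P ∩ reflP z P) v,
       (1 - (1 : ℝ)) • z + (1 : ℝ) • topPt (P ∩ reflP z P) v)
        = (botPt (P ∩ reflP z P) v, topPt (P ∩ reflP z P) v)) := by
  have hbot := continuousOn_botPt_inter_reflP hP.isCompact hP.convex
    (fun z hz => hP.locallyConicAt hz) hqpo
  have htop : ContinuousOn (fun z => topPt (P ∩ reflP z P) v) P :=
    ((continuousOn_id.const_smul (2 : ℝ)).sub hbot).congr fun z hz =>
      topPt_eq_two_smul_sub_botPt (hqpo z hz)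
  have hbotP : ∀ z ∈ P, botPt (P ∩ reflP z P) v ∈ P := fun z hz =>
    (isBotOf_botPt (hqpo z hz).1.exists).1.1
  have htopP : ∀ z ∈ P, topPt (P ∩ reflP z P) v ∈ P := fun z hz =>
    (isTopOf_topPt (hqpo z hz).2.exists).1.1
  refine ⟨fun z hz => ⟨isBotOf_botPt (hqpo z hz).1.exists, isTopOf_topPt (hqpo z hz).2.exists,
      hbotP z hz, htopP z hz, botPt_add_topPt (hqpo z hz), fun x hx y hy hxy =>
      ⟨dot_botPt_sub_topPt_le (hqpo z hz) hx hy hxy,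
        eq_botPt_and_eq_topPt_of_dot_eq (hqpo z hz) hx hy hxy⟩⟩,
    fun z hz => ?_, ?_, (continuousOn_straightLineHomotopy hbot).prodMk (continuousOn_straightLineHomotopy htop),
    fun z _ => by simp⟩
  · rw [inter_reflP_eq_singleton_of_isFace hz]
    exact ⟨botPt_singleton, topPt_singleton⟩
  · rintro ⟨z, t⟩ ⟨hz, ht0, ht1⟩
    exact ⟨hP.convex hz (hbotP z hz) (by linarith) ht0 (by ring),
      hP.convex hz (htopP z hz) (by linarith) ht0 (by ring)⟩

end
end

section
/- Let P ⊆ ℝⁿ be a polytope, let v ∈ ℝⁿ, and let F, G be two nonempty faces of P. Then (F,G) ∈ F^φ if and only if v ∈ cone(−N_P(F) ∪ N_P(G)). -/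
/-!
If `v = b - a` with `a ∈ N_P(F)` and `b ∈ N_P(G)`, a move `(x, y) ↦ (x', y')` inside `P × P`
fixing `x + y` changes `φ` by `2 ⟨x' - x, v⟩ = 2 (⟨a, x - x'⟩ + ⟨b, y - y'⟩) ≥ 0`, since `x`
maximizes `a` and `y` maximizes `b`; so no point of `F × G` lies above a lower point of `P^φ`.

Conversely, take for `x₀, y₀` the centroids of the vertices of `F` and `G`: a functional maximized
over `P` at such a point is maximized on the whole face. Minimality of `φ(x₀, y₀)` on its fibre says
that no tangent directions `p` at `x₀` and `q` at `y₀` of the polytope satisfy `p + q = 0` and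
`⟨q, v⟩ > 0`. The tangent cones are finitely generated, so Farkas' lemma applies (a finitely
generated cone is closed, by the conic Carathéodory theorem) and yields a separating functional
`(d, -δ)` with `δ > 0`; then `a = d / δ` and `b = v + a` are the required normals.
-/

open scoped BigOperators

noncomputable section

section ConicHull

variable {E ι : Type*} [AddCommGroup E] [Module ℝ E]

def conicHull (g : ι → E) (J : Finset ι) : Set E :=
  {x | ∃ c : ι → ℝ, (∀ i ∈ J, 0 ≤ c i) ∧ ∑ i ∈ J, c i • g i = x}

variable {g : ι → E}

lemma zero_mem_conicHull (J : Finset ι) : (0 : E) ∈ conicHull g J :=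
  ⟨0, fun _ _ => le_rfl, by simp⟩

lemma smul_mem_conicHull [DecidableEq ι] {J : Finset ι} {i : ι} (hi : i ∈ J) {t : ℝ}
    (ht : 0 ≤ t) : t • g i ∈ conicHull g J :=
  ⟨Pi.single i t, fun j _ => by by_cases h : j = i <;> simp [h, ht], by
    simp [Pi.single_apply, hi]⟩

lemma conicHull_mono {J K : Finset ι} (h : J ⊆ K) : conicHull g J ⊆ conicHull g K := by
  classical
  rintro x ⟨c, hc, rfl⟩
  refine ⟨fun i => if i ∈ J then c i else 0, fun i _ => ?_, ?_⟩
  · dsimp only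
    split_ifs with hi
    exacts [hc i hi, le_rfl]
  · rw [← Finset.sum_subset h fun i _ hi => by simp [hi]]
    exact Finset.sum_congr rfl fun i hi => by simp [hi]

lemma convex_conicHull (J : Finset ι) : Convex ℝ (conicHull g J) := by
  rintro _ ⟨c, hc, rfl⟩ _ ⟨d, hd, rfl⟩ a b ha hb -
  refine ⟨a • c + b • d, fun i hi => ?_, ?_⟩
  · simp only [Pi.add_apply, Pi.smul_apply, smul_eq_mul]
    exact add_nonneg (mul_nonneg ha (hc i hi)) (mul_nonneg hb (hd i hi))
  · simp only [Pi.add_apply, Pi.smul_apply, smul_eq_mul, add_smul, mul_smul,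
      Finset.sum_add_distrib, Finset.smul_sum]

lemma exists_mem_conicHull_erase [DecidableEq ι] {J : Finset ι} {x : E}
    (hJ : ¬LinearIndepOn ℝ g J) (hx : x ∈ conicHull g J) :
    ∃ j ∈ J, x ∈ conicHull g (J.erase j) := by
  obtain ⟨c, hc, rfl⟩ := hx
  obtain ⟨f, hf, hpos⟩ : ∃ f : ι → ℝ, ∑ i ∈ J, f i • g i = 0 ∧ ∃ i ∈ J, 0 < f i := by
    obtain ⟨f, hf, i, hi, hfi⟩ := not_linearIndepOn_finset_iff.mp hJ
    rcases hfi.lt_or_gt with h | h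
    · exact ⟨-f, by simp [neg_smul, hf], i, hi, by simpa using h⟩
    · exact ⟨f, hf, i, hi, h⟩
  -- Subtract the largest multiple of the dependence `f` that keeps all coefficients nonnegative.
  obtain ⟨j, hj, hjmin⟩ := Finset.exists_min_image (J.filter (0 < f ·)) (fun i => c i / f i)
    (by obtain ⟨i, hi, h⟩ := hpos; exact ⟨i, Finset.mem_filter.2 ⟨hi, h⟩⟩)
  obtain ⟨hjJ, hfj⟩ := Finset.mem_filter.1 hj
  set ρ := c j / f j
  have hρ : 0 ≤ ρ := div_nonneg (hc j hjJ) hfj.le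
  refine ⟨j, hjJ, fun i => c i - ρ * f i, fun i hi => ?_, ?_⟩
  · have hiJ := Finset.mem_of_mem_erase hi
    rcases le_or_gt (f i) 0 with h | h
    · nlinarith [hc i hiJ]
    · have := (le_div_iff₀ h).1 (hjmin i (Finset.mem_filter.2 ⟨hiJ, h⟩))
      linarith
  · rw [Finset.sum_erase _ (by simp [ρ, hfj.ne'])]
    simp only [sub_smul, Finset.sum_sub_distrib, mul_smul, ← Finset.smul_sum, hf, smul_zero,
      sub_zero]

theorem exists_linearIndepOn_subset_mem_conicHull {J : Finset ι} {x : E}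
    (hx : x ∈ conicHull g J) : ∃ K ⊆ J, LinearIndepOn ℝ g K ∧ x ∈ conicHull g K := by
  classical
  induction J using Finset.strongInduction with
  | H J ih =>
    by_cases hJ : LinearIndepOn ℝ g J
    · exact ⟨J, subset_rfl, hJ, hx⟩
    obtain ⟨j, hj, hxj⟩ := exists_mem_conicHull_erase hJ hx
    obtain ⟨K, hK, hKind, hxK⟩ := ih _ (Finset.erase_ssubset hj) hxj
    exact ⟨K, hK.trans (Finset.erase_subset _ _), hKind, hxK⟩

lemma conicHull_eq_image (K : Finset ι) :
    conicHull g K = Fintype.linearCombination ℝ (fun k : K => g k) '' Set.Ici 0 := by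
  ext x
  constructor
  · rintro ⟨c, hc, rfl⟩
    exact ⟨fun k => c k, fun k => hc k k.2, by
      rw [Fintype.linearCombination_apply]; exact K.sum_coe_sort fun i => c i • g i⟩
  · rintro ⟨c, hc, rfl⟩
    classical
    refine ⟨fun i => if h : i ∈ K then c ⟨i, h⟩ else 0,
      fun i hi => by simpa [hi] using hc ⟨i, hi⟩, ?_⟩
    rw [Fintype.linearCombination_apply, ← K.sum_coe_sort]
    simp

variable [TopologicalSpace E] [IsTopologicalAddGroup E] [ContinuousSMul ℝ E] [T2Space E]

lemma isClosed_conicHull_of_linearIndepOn {K : Finset ι} (hK : LinearIndepOn ℝ g K) :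
    IsClosed (conicHull g K) := by
  rw [conicHull_eq_image]
  have hker := LinearMap.ker_eq_bot.2 hK.fintypeLinearCombination_injective
  exact (LinearMap.isClosedEmbedding_of_injective hker).isClosedMap _ isClosed_Ici

theorem isClosed_conicHull (J : Finset ι) : IsClosed (conicHull g J) := by
  classical
  have hJ : conicHull g J = ⋃ (K : Finset ι)
      (_ : K ∈ J.powerset.filter fun K : Finset ι => LinearIndepOn ℝ g ↑K), conicHull g K := by
    refine subset_antisymm (fun x hx => ?_) (Set.iUnion₂_subset fun K hK =>
      conicHull_mono (Finset.mem_powerset.1 (Finset.mem_filter.1 hK).1))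
    obtain ⟨K, hKJ, hK, hxK⟩ := exists_linearIndepOn_subset_mem_conicHull hx
    exact Set.mem_biUnion (Finset.mem_filter.2 ⟨Finset.mem_powerset.2 hKJ, hK⟩) hxK
  rw [hJ]
  exact isClosed_biUnion_finset fun K hK =>
    isClosed_conicHull_of_linearIndepOn (Finset.mem_filter.1 hK).2

theorem exists_strongDual_of_notMem_conicHull [LocallyConvexSpace ℝ E] {J : Finset ι} {x : E}
    (hx : x ∉ conicHull g J) : ∃ f : StrongDual ℝ E, (∀ i ∈ J, f (g i) ≤ 0) ∧ 0 < f x := by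
  classical
  obtain ⟨f, u, hfu, hux⟩ :=
    geometric_hahn_banach_closed_point (convex_conicHull J) (isClosed_conicHull J) hx
  have hu : 0 < u := by simpa using hfu 0 (zero_mem_conicHull J)
  refine ⟨f, fun i hi => ?_, hu.trans hux⟩
  by_contra! h
  have := hfu _ (smul_mem_conicHull hi (div_pos hu h).le)
  rw [map_smul, smul_eq_mul, div_mul_cancel₀ _ h.ne'] at this
  exact lt_irrefl _ this

end ConicHull

theorem exists_dotProduct_of_notMem_conicHull {ι κ : Type*} [Fintype κ] {g : ι → κ → ℝ}
    {J : Finset ι} {x : κ → ℝ} (hx : x ∉ conicHull g J) :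
    ∃ a : κ → ℝ, (∀ i ∈ J, a ⬝ᵥ g i ≤ 0) ∧ 0 < a ⬝ᵥ x := by
  classical
  obtain ⟨f, hf, hfx⟩ := exists_strongDual_of_notMem_conicHull hx
  have hdot : ∀ y, f y = (fun k => f (Pi.single k 1)) ⬝ᵥ y := fun y => by
    have h := LinearMap.pi_apply_eq_sum_univ f.toLinearMap y
    rw [ContinuousLinearMap.coe_coe] at h
    rw [dotProduct, h]
    refine Finset.sum_congr rfl fun k _ => ?_
    rw [smul_eq_mul, mul_comm]
    congr 2
    exact funext fun j => by simp [Pi.single_apply, eq_comm]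
  exact ⟨_, fun i hi => hdot (g i) ▸ hf i hi, hdot x ▸ hfx⟩

lemma dotProduct_le_of_mem_convexHull {κ : Type*} [Fintype κ] {s : Set (κ → ℝ)} {a : κ → ℝ}
    {r : ℝ} (h : ∀ x ∈ s, a ⬝ᵥ x ≤ r) {y : κ → ℝ} (hy : y ∈ convexHull ℝ s) : a ⬝ᵥ y ≤ r :=
  convexHull_min h (convex_halfSpace_le (dotProductBilin ℝ ℝ a).isLinear r) hy

lemma dotProduct_snoc {n : ℕ} (w : Fin (n + 1) → ℝ) (y : Fin n → ℝ) (b : ℝ) :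
    w ⬝ᵥ Fin.snoc y b = Fin.init w ⬝ᵥ y + w (Fin.last n) * b := by
  simp [dotProduct, Fin.sum_univ_castSucc, Fin.init]

theorem Convex.add_sum_smul_sub_mem {E ι : Type*} [AddCommGroup E] [Module ℝ E] {P : Set E}
    (hP : Convex ℝ P) {z : E} (hz : z ∈ P) {J : Finset ι} {w : ι → ℝ} {y : ι → E}
    (hw : ∀ i ∈ J, 0 ≤ w i) (hw1 : ∑ i ∈ J, w i ≤ 1) (hy : ∀ i ∈ J, y i ∈ P) :
    z + ∑ i ∈ J, w i • (y i - z) ∈ P := by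
  rcases (Finset.sum_nonneg hw).eq_or_lt with hW | hW
  · have hw0 := (Finset.sum_eq_zero_iff_of_nonneg hw).1 hW.symm
    rwa [Finset.sum_eq_zero fun i hi => by rw [hw0 i hi, zero_smul], add_zero]
  · have hsum : ∑ i ∈ J, w i • (y i - z) = (∑ i ∈ J, w i) • (J.centerMass w y - z) := by
      rw [Finset.centerMass, smul_sub, smul_smul, mul_inv_cancel₀ hW.ne', one_smul]
      simp [smul_sub, Finset.sum_sub_distrib, Finset.sum_smul]
    rw [hsum]
    exact hP.add_smul_sub_mem hz (hP.centerMass_mem hw hW hy) ⟨hW.le, hw1⟩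

theorem IsExposed.subset_convexHull_inter {E : Type*} [AddCommGroup E] [Module ℝ E]
    [TopologicalSpace E] [T2Space E] [IsTopologicalAddGroup E] [ContinuousSMul ℝ E]
    [LocallyConvexSpace ℝ E] {S F : Set E} (hS : S.Finite) (hF : IsExposed ℝ (convexHull ℝ S) F) :
    F ⊆ convexHull ℝ (S ∩ F) := by
  have hFc := hF.isCompact (hS.isCompact_convexHull ℝ)
  have hFconv := hF.convex (convex_convexHull ℝ S)
  have hext : F.extremePoints ℝ ⊆ S ∩ F := fun x hx =>
    ⟨extremePoints_convexHull_subset (hF.isExtreme.extremePoints_subset_extremePoints hx), hx.1⟩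
  calc F = closure (convexHull ℝ (F.extremePoints ℝ)) :=
        (closure_convexHull_extremePoints hFc hFconv).symm
    _ ⊆ closure (convexHull ℝ (S ∩ F)) := closure_mono (convexHull_mono hext)
    _ = convexHull ℝ (S ∩ F) := ((hS.inter_of_left F).isCompact_convexHull ℝ).isClosed.closure_eq

section Polytope

variable {n : ℕ} {S : Finset (Vec n)} {v x₀ y₀ : Vec n}

lemma dot_eq_dotProduct (x y : Vec n) : dot x y = x ⬝ᵥ y := rfl

lemma IsFace.isExposed {P F : Set (Vec n)} (h : IsFace P F) : IsExposed ℝ P F := by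
  obtain ⟨c, rfl⟩ := h
  exact fun _ => ⟨LinearMap.toContinuousLinearMap (dotProductBilin ℝ ℝ c), by
    simp [dot_eq_dotProduct]⟩

lemma mem_normalCone_of_le_centroid {P F : Set (Vec n)} {T : Finset (Vec n)} (hT : T.Nonempty)
    (hTP : ↑T ⊆ P) (hFP : F ⊆ P) (hFT : F ⊆ convexHull ℝ ↑T) {a : Vec n}
    (ha : ∀ y ∈ P, a ⬝ᵥ y ≤ a ⬝ᵥ T.centroid ℝ id) : a ∈ normalCone P F := by
  -- the centroid value is the average of the values `a ⬝ᵥ t`, none of which exceeds it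
  have hM : ∑ t ∈ T, a ⬝ᵥ t = ∑ _t ∈ T, a ⬝ᵥ T.centroid ℝ id := by
    have hcard : (T.card : ℝ) ≠ 0 := by exact_mod_cast hT.card_pos.ne'
    rw [Finset.sum_const, nsmul_eq_mul, T.centroid_eq_centerMass hT, Finset.centerMass,
      T.sum_centroidWeights_eq_one_of_nonempty ℝ hT]
    simp [dotProduct_sum, Finset.centroidWeights_apply, dotProduct_smul, ← Finset.mul_sum, hcard]
  have heq : ∀ t ∈ T, a ⬝ᵥ t = a ⬝ᵥ T.centroid ℝ id :=
    (Finset.sum_eq_sum_iff_of_le fun t ht => ha t (hTP ht)).1 hM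
  intro x hx
  have hxM : a ⬝ᵥ x = a ⬝ᵥ T.centroid ℝ id :=
    convexHull_min heq (convex_hyperplane (dotProductBilin ℝ ℝ a).isLinear _) (hFT hx)
  exact ⟨hFP hx, fun y hy => (ha y hy).trans hxM.ge⟩

lemma IsFace.exists_mem_forall_le_imp_mem_normalCone {F : Set (Vec n)}
    (hF : IsFace (convexHull ℝ ↑S) F) (hFne : F.Nonempty) :
    ∃ x₀ ∈ F, ∀ a : Vec n, (∀ y ∈ convexHull ℝ ↑S, a ⬝ᵥ y ≤ a ⬝ᵥ x₀) →
      a ∈ normalCone (convexHull ℝ ↑S) F := by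
  classical
  set T := S.filter (· ∈ F)
  have hTcoe : (↑T : Set (Vec n)) = ↑S ∩ F := by ext; simp [T]
  have hFT : F ⊆ convexHull ℝ ↑T := hTcoe ▸ hF.isExposed.subset_convexHull_inter S.finite_toSet
  have hT : T.Nonempty := by
    obtain ⟨x, hx⟩ := hFne
    exact Finset.coe_nonempty.1 (convexHull_nonempty_iff.1 ⟨x, hFT hx⟩)
  have hTF : (↑T : Set (Vec n)) ⊆ F := hTcoe ▸ Set.inter_subset_right
  have hFconv := hF.isExposed.convex (convex_convexHull ℝ _)
  exact ⟨T.centroid ℝ id, convexHull_min hTF hFconv (T.centroid_mem_convexHull hT),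
    fun a ha => mem_normalCone_of_le_centroid hT (hTF.trans hF.isExposed.subset)
      hF.isExposed.subset hFT ha⟩

/-- The cone generated by these vectors consists of the `(p + q, -⟨q, v⟩)` for `p, q` tangent to
`conv S` at `x₀, y₀`; it contains `(0, -1)` iff some move of `(x₀, y₀)` fixing `x₀ + y₀`
decreases `⟨x₀ - y₀, v⟩` to first order. -/
def tangentLift (v x₀ y₀ : Vec n) : Vec n ⊕ Vec n → Vec (n + 1) :=
  Sum.elim (fun s => Fin.snoc (s - x₀) 0) (fun s => Fin.snoc (s - y₀) (-((s - y₀) ⬝ᵥ v)))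

lemma snoc_neg_one_notMem_conicHull_tangentLift
    (hx₀ : x₀ ∈ convexHull ℝ ↑S) (hy₀ : y₀ ∈ convexHull ℝ ↑S)
    (hmin : ∀ x ∈ convexHull ℝ ↑S, ∀ y ∈ convexHull ℝ ↑S, x + y = x₀ + y₀ →
      (x₀ - y₀) ⬝ᵥ v ≤ (x - y) ⬝ᵥ v) :
    (Fin.snoc 0 (-1) : Vec (n + 1)) ∉ conicHull (tangentLift v x₀ y₀) (S.disjSum S) := by
  rintro ⟨c, hc, hsum⟩
  rw [Finset.sum_disjSum] at hsum
  set p := ∑ s ∈ S, c (.inl s) • (s - x₀)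
  set q := ∑ s ∈ S, c (.inr s) • (s - y₀)
  have hpq : p = -q := eq_neg_of_add_eq_zero_left <| funext fun i => by
    simpa [p, q, Finset.sum_apply, tangentLift] using congrFun hsum i.castSucc
  have hqv : q ⬝ᵥ v = 1 := by
    have := congrFun hsum (Fin.last n)
    simp only [tangentLift, Finset.sum_apply, Pi.add_apply, Pi.smul_apply, Sum.elim_inl,
      Sum.elim_inr, Fin.snoc_last, smul_eq_mul, mul_zero, Finset.sum_const_zero, zero_add] at this
    simp only [mul_neg, Finset.sum_neg_distrib, neg_inj] at this
    simpa only [q, sum_dotProduct, smul_dotProduct, smul_eq_mul] using this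
  -- a small step from `(x₀, y₀)` along `(p, q)` stays in `P × P` and decreases `φ`
  set t := (1 + ∑ s ∈ S, c (.inl s) + ∑ s ∈ S, c (.inr s))⁻¹
  have hA : 0 ≤ ∑ s ∈ S, c (.inl s) := Finset.sum_nonneg fun s hs => hc _ (by simpa using hs)
  have hB : 0 ≤ ∑ s ∈ S, c (.inr s) := Finset.sum_nonneg fun s hs => hc _ (by simpa using hs)
  have ht : 0 < t := inv_pos.2 (by linarith)
  have hstep : ∀ {z : Vec n} (e : Vec n → ℝ), z ∈ convexHull ℝ ↑S → (∀ s ∈ S, 0 ≤ e s) →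
      ∑ s ∈ S, e s ≤ 1 + ∑ s ∈ S, c (.inl s) + ∑ s ∈ S, c (.inr s) →
      z + t • ∑ s ∈ S, e s • (s - z) ∈ convexHull ℝ ↑S := by
    intro z e hz he he1
    rw [Finset.smul_sum]
    simp_rw [smul_smul]
    refine (convex_convexHull ℝ _).add_sum_smul_sub_mem hz
      (fun s hs => mul_nonneg ht.le (he s hs)) ?_ fun s hs => subset_convexHull ℝ _ hs
    rw [← Finset.mul_sum]
    exact inv_mul_le_one_of_le₀ he1 (by linarith)
  have hx : x₀ + t • p ∈ convexHull ℝ ↑S :=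
    hstep (fun s => c (.inl s)) hx₀ (fun s hs => hc _ (by simpa using hs)) (by linarith)
  have hy : y₀ + t • q ∈ convexHull ℝ ↑S :=
    hstep (fun s => c (.inr s)) hy₀ (fun s hs => hc _ (by simpa using hs)) (by linarith)
  have := hmin _ hx _ hy (by rw [hpq, smul_neg]; abel)
  rw [show x₀ + t • p - (y₀ + t • q) = x₀ - y₀ - (2 * t) • q by rw [hpq]; module,
    sub_dotProduct (x₀ - y₀), smul_dotProduct, hqv] at this
  simp only [smul_eq_mul, mul_one] at this
  linarith

theorem exists_normal_sub_normal_eq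
    (hx₀ : x₀ ∈ convexHull ℝ ↑S) (hy₀ : y₀ ∈ convexHull ℝ ↑S)
    (hmin : ∀ x ∈ convexHull ℝ ↑S, ∀ y ∈ convexHull ℝ ↑S, x + y = x₀ + y₀ →
      (x₀ - y₀) ⬝ᵥ v ≤ (x - y) ⬝ᵥ v) :
    ∃ a b : Vec n, (∀ y ∈ convexHull ℝ ↑S, a ⬝ᵥ y ≤ a ⬝ᵥ x₀) ∧
      (∀ y ∈ convexHull ℝ ↑S, b ⬝ᵥ y ≤ b ⬝ᵥ y₀) ∧ v = b - a := by
  -- Farkas: a separating vector `w = (d, -δ)` with `δ > 0`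
  obtain ⟨w, hw, hw0⟩ := exists_dotProduct_of_notMem_conicHull
    (snoc_neg_one_notMem_conicHull_tangentLift hx₀ hy₀ hmin)
  rw [dotProduct_snoc, dotProduct_zero, zero_add] at hw0
  set δ := -w (Fin.last n)
  have hδ : 0 < δ := by linarith
  set a := δ⁻¹ • Fin.init w
  have hxS : ∀ s ∈ S, a ⬝ᵥ s ≤ a ⬝ᵥ x₀ := fun s hs => by
    have := hw (.inl s) (by simpa using hs)
    rw [tangentLift, Sum.elim_inl, dotProduct_snoc, mul_zero, add_zero] at this
    have : a ⬝ᵥ (s - x₀) ≤ 0 := by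
      rw [smul_dotProduct, smul_eq_mul]; exact mul_nonpos_of_nonneg_of_nonpos (by positivity) this
    rwa [dotProduct_sub, sub_nonpos] at this
  have hyS : ∀ s ∈ S, (v + a) ⬝ᵥ s ≤ (v + a) ⬝ᵥ y₀ := fun s hs => by
    have := hw (.inr s) (by simpa using hs)
    rw [tangentLift, Sum.elim_inr, dotProduct_snoc] at this
    have : (v + a) ⬝ᵥ (s - y₀) ≤ 0 := by
      rw [add_dotProduct, smul_dotProduct, smul_eq_mul, dotProduct_comm v]
      have : δ⁻¹ * Fin.init w ⬝ᵥ (s - y₀) ≤ -((s - y₀) ⬝ᵥ v) := by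
        rw [inv_mul_le_iff₀ hδ]; simp only [δ] at this ⊢; linarith
      linarith
    rwa [dotProduct_sub, sub_nonpos] at this
  exact ⟨a, v + a, fun y => dotProduct_le_of_mem_convexHull hxS,
    fun y => dotProduct_le_of_mem_convexHull hyS, by abel⟩

lemma add_mem_coneOf {X : Set (Vec n)} {x y : Vec n} (hx : x ∈ X) (hy : y ∈ X) :
    x + y ∈ coneOf X :=
  ⟨2, ![x, y], ![1, 1], fun i => by fin_cases i <;> assumption,
    fun i => by fin_cases i <;> norm_num, by simp [Fin.sum_univ_two]⟩

lemma dotProduct_nonpos_of_mem_coneOf {X : Set (Vec n)} {d x : Vec n}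
    (hX : ∀ c ∈ X, d ⬝ᵥ c ≤ 0) (hx : x ∈ coneOf X) : d ⬝ᵥ x ≤ 0 := by
  obtain ⟨k, c, l, hc, hl, rfl⟩ := hx
  rw [dotProduct_sum]
  exact Finset.sum_nonpos fun i _ => by
    rw [dotProduct_smul, smul_eq_mul]
    exact mul_nonpos_of_nonneg_of_nonpos (hl i) (hX _ (hc i))

variable {P F G : Set (Vec n)}

lemma inFphi_iff : InFphi P v F G ↔ ∀ x ∈ F, ∀ y ∈ G, ∀ x' ∈ P, ∀ y' ∈ P,
    x' + y' = x + y → (x - y) ⬝ᵥ v ≤ (x' - y') ⬝ᵥ v := by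
  constructor
  · intro h x hx y hy x' hx' y' hy' hsum
    by_contra! hlt
    exact h ⟨x, hx, y, hy, _, sub_pos.2 hlt, x', hx', y', hy',
      Fin.snoc_inj.2 ⟨by rw [hsum], by simp only [dot_eq_dotProduct]; ring⟩⟩
  · rintro h ⟨x, hx, y, hy, lam, hlam, x', hx', y', hy', heq⟩
    obtain ⟨hsum, hφ⟩ := Fin.snoc_inj.1 heq
    have := h x hx y hy x' hx' y' hy'
      (smul_right_injective _ (by norm_num : (1 / 2 : ℝ) ≠ 0) hsum).symm
    simp only [dot_eq_dotProduct] at hφ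
    linarith

theorem inFphi_of_mem_coneOf (hv : v ∈ coneOf ((Neg.neg '' normalCone P F) ∪ normalCone P G)) :
    InFphi P v F G := by
  refine inFphi_iff.2 fun x hx y hy x' hx' y' hy' hsum => ?_
  have hd : x - x' = y' - y := by
    rw [sub_eq_sub_iff_add_eq_add, add_comm y', hsum]
  have key : (x - x') ⬝ᵥ v ≤ 0 := by
    refine dotProduct_nonpos_of_mem_coneOf ?_ hv
    rintro _ (⟨a, ha, rfl⟩ | hb)
    · have := (ha hx).2 x' hx'
      rw [dot_eq_dotProduct, dot_eq_dotProduct] at this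
      rw [dotProduct_neg, dotProduct_comm, dotProduct_sub]
      linarith
    · have := (hb hy).2 y' hy'
      rw [dot_eq_dotProduct, dot_eq_dotProduct] at this
      rw [hd, dotProduct_comm, dotProduct_sub]
      linarith
  have : x' - y' = x - y - (2 : ℝ) • (x - x') := by
    rw [show y' = x + y - x' by rw [← hsum]; abel]; module
  rw [this, sub_dotProduct (x - y), smul_dotProduct, smul_eq_mul]
  linarith

end Polytope

/-- For a polytope `P ⊆ ℝⁿ`, a vector `v ∈ ℝⁿ` and nonempty faces `F, G` of `P`,
`(F, G) ∈ F^φ` if and only if `v ∈ cone(-N_P(F) ∪ N_P(G))`. -/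
theorem stmt1 {n : ℕ} (P : Set (Vec n)) (v : Vec n) (F G : Set (Vec n))
    (hP : IsPolytope P) (hF : IsFace P F) (hG : IsFace P G)
    (hFne : F.Nonempty) (hGne : G.Nonempty) :
    InFphi P v F G ↔ v ∈ coneOf ((Neg.neg '' normalCone P F) ∪ normalCone P G) := by
  refine ⟨fun h => ?_, inFphi_of_mem_coneOf⟩
  obtain ⟨S, rfl⟩ := hP
  obtain ⟨x₀, hx₀F, hF₀⟩ := hF.exists_mem_forall_le_imp_mem_normalCone hFne
  obtain ⟨y₀, hy₀G, hG₀⟩ := hG.exists_mem_forall_le_imp_mem_normalCone hGne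
  obtain ⟨a, b, ha, hb, rfl⟩ := exists_normal_sub_normal_eq (hF.isExposed.subset hx₀F)
    (hG.isExposed.subset hy₀G) fun x hx y hy hxy => inFphi_iff.1 h x₀ hx₀F y₀ hy₀G x hx y hy hxy
  rw [sub_eq_neg_add]
  exact add_mem_coneOf (Or.inl ⟨a, hF₀ a ha, rfl⟩) (Or.inr (hG₀ b hb))

end
end

section
/- Let P ⊆ ℝⁿ be a polytope and let F, G be two nonempty faces of P. For any z, w ∈ (relint(F) + relint(G))/2, one has N_{P∩ρ_zP}(G ∩ ρ_zF) = N_{P∩ρ_wP}(G ∩ ρ_wF) = cone(−N_P(F) ∪ N_P(G)). -/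
open scoped BigOperators

noncomputable section

section Aux

variable {n : ℕ}

lemma dot_comm (x y : Vec n) : dot x y = dot y x := by
  simp [dot, mul_comm]

lemma dot_add_right (c x y : Vec n) : dot c (x + y) = dot c x + dot c y := by
  simp [dot, Pi.add_apply, mul_add, Finset.sum_add_distrib]

lemma dot_smul_right (c : Vec n) (r : ℝ) (x : Vec n) : dot c (r • x) = r * dot c x := by
  simp only [dot, Pi.smul_apply, smul_eq_mul, Finset.mul_sum]
  exact Finset.sum_congr rfl fun i _ => by ring

lemma dot_sub_right (c x y : Vec n) : dot c (x - y) = dot c x - dot c y := by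
  simp [dot, Pi.sub_apply, mul_sub, Finset.sum_sub_distrib]

lemma dot_neg_right (c x : Vec n) : dot c (-x) = -dot c x := by
  simp [dot, Finset.sum_neg_distrib]

lemma dot_add_left (x y c : Vec n) : dot (x + y) c = dot x c + dot y c := by
  rw [dot_comm, dot_add_right, dot_comm c x, dot_comm c y]

lemma dot_sub_left (x y c : Vec n) : dot (x - y) c = dot x c - dot y c := by
  rw [dot_comm, dot_sub_right, dot_comm c x, dot_comm c y]

lemma dot_smul_left (r : ℝ) (x c : Vec n) : dot (r • x) c = r * dot x c := by
  rw [dot_comm, dot_smul_right, dot_comm c x]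

lemma dot_neg_left (x c : Vec n) : dot (-x) c = -dot x c := by
  rw [dot_comm, dot_neg_right, dot_comm c x]

lemma dot_sum_smul_left {m : ℕ} (l : Fin m → ℝ) (v : Fin m → Vec n) (w : Vec n) :
    dot (∑ i, l i • v i) w = ∑ i, l i * dot (v i) w := by
  simp only [dot, Finset.sum_apply, Pi.smul_apply, smul_eq_mul, Finset.sum_mul, Finset.mul_sum]
  rw [Finset.sum_comm]
  exact Finset.sum_congr rfl fun i _ => Finset.sum_congr rfl fun j _ => by ring

lemma dot_sum_smul_right' {ι : Type} [Fintype ι] (w : Vec n) (l : ι → ℝ) (v : ι → Vec n) :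
    dot w (∑ i, l i • v i) = ∑ i, l i * dot w (v i) := by
  simp only [dot, Finset.sum_apply, Pi.smul_apply, smul_eq_mul, Finset.mul_sum]
  rw [Finset.sum_comm]
  exact Finset.sum_congr rfl fun i _ => Finset.sum_congr rfl fun j _ => by ring

lemma dot_self_nonneg (c : Vec n) : 0 ≤ dot c c :=
  Finset.sum_nonneg fun i _ => mul_self_nonneg _

lemma eq_zero_of_dot_self_nonpos {c : Vec n} (h : dot c c ≤ 0) : c = 0 := by
  have h0 : dot c c = 0 := le_antisymm h (dot_self_nonneg c)
  funext j
  have := (Finset.sum_eq_zero_iff_of_nonneg (fun i _ => mul_self_nonneg (c i))).1 h0 j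
    (Finset.mem_univ j)
  have := mul_self_eq_zero.1 this
  simpa using this

/-- Homogeneous Farkas lemma, by elementary induction. -/
lemma farkas_fin {N : ℕ} : ∀ (m : ℕ) (a : Fin m → Vec N) (c : Vec N),
    (∀ d, (∀ i, dot (a i) d ≤ 0) → dot c d ≤ 0) →
    ∃ l : Fin m → ℝ, (∀ i, 0 ≤ l i) ∧ c = ∑ i, l i • a i := by
  intro m
  induction m with
  | zero =>
    intro a c h
    have hc0 : c = 0 := eq_zero_of_dot_self_nonpos (h c (fun i => i.elim0))
    exact ⟨fun _ => 0, fun _ => le_rfl, by simp [hc0]⟩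
  | succ m ih =>
    intro a c h
    by_cases hc : ∀ d, (∀ i : Fin m, dot (a i.castSucc) d ≤ 0) → dot c d ≤ 0
    · obtain ⟨l, hl, hsum⟩ := ih (fun i => a i.castSucc) c hc
      refine ⟨Fin.snoc l 0, fun i => ?_, ?_⟩
      · refine Fin.lastCases ?_ (fun j => ?_) i <;> simp [hl]
      · rw [Fin.sum_univ_castSucc]
        simp only [Fin.snoc_castSucc, Fin.snoc_last, zero_smul, add_zero, hsum]
    · push_neg at hc
      obtain ⟨d₀, hd₀, hcd₀⟩ := hc
      set A := a (Fin.last m) with hAdef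
      have hAd₀ : 0 < dot A d₀ := by
        by_contra hA0
        push_neg at hA0
        have := h d₀ (fun i => Fin.lastCases hA0 hd₀ i)
        linarith
      set α := dot A d₀ with hαdef
      set a' : Fin m → Vec N := fun i => α • a i.castSucc - (dot (a i.castSucc) d₀) • A with ha'
      set c' : Vec N := α • c - (dot c d₀) • A with hc'
      have hkey : ∀ (v d : Vec N),
          dot (α • v - (dot v d₀) • A) d = dot v (α • d - (dot A d) • d₀) := by
        intro v d
        rw [dot_sub_left, dot_smul_left, dot_smul_left, dot_sub_right, dot_smul_right,
          dot_smul_right]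
        ring
      have hIH : ∀ d, (∀ i, dot (a' i) d ≤ 0) → dot c' d ≤ 0 := by
        intro d hd
        have h1 : ∀ i : Fin (m + 1), dot (a i) (α • d - (dot A d) • d₀) ≤ 0 := by
          intro i
          refine Fin.lastCases ?_ (fun j => ?_) i
          · rw [dot_sub_right, dot_smul_right, dot_smul_right]
            have : α * dot A d - dot A d * dot A d₀ = 0 := by rw [hαdef]; ring
            linarith [this.le]
          · rw [← hkey (a j.castSucc) d]
            exact hd j
        have := h _ h1
        rw [hc', hkey c d]
        exact this
      obtain ⟨l, hl, hsum⟩ := ih a' c' hIH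
      set μ := (dot c d₀ - ∑ i, l i * dot (a i.castSucc) d₀) / α with hμ
      have hsum_nonpos : ∑ i, l i * dot (a i.castSucc) d₀ ≤ 0 :=
        Finset.sum_nonpos fun i _ => mul_nonpos_of_nonneg_of_nonpos (hl i) (hd₀ i)
      have hμ0 : 0 ≤ μ := div_nonneg (by linarith) hAd₀.le
      have hα : α ≠ 0 := ne_of_gt hAd₀
      have hAcoef : α * μ = dot c d₀ - ∑ i, l i * dot (a i.castSucc) d₀ := by
        rw [hμ]; field_simp
      have key : α • c = (∑ i, (α * l i) • a i.castSucc) + (α * μ) • A := by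
        have e1 : α • c = c' + (dot c d₀) • A := by rw [hc']; abel
        rw [e1, hsum, hAcoef]
        calc (∑ i, l i • a' i) + (dot c d₀) • A
            = (∑ i, ((α * l i) • a i.castSucc - (l i * dot (a i.castSucc) d₀) • A))
                + (dot c d₀) • A := by
              congr 1
              refine Finset.sum_congr rfl fun i _ => ?_
              rw [ha']
              rw [smul_sub, smul_smul, smul_smul, mul_comm (l i) α]
          _ = (∑ i, (α * l i) • a i.castSucc) - (∑ i, (l i * dot (a i.castSucc) d₀)) • A
                + (dot c d₀) • A := by rw [Finset.sum_sub_distrib, Finset.sum_smul]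
          _ = (∑ i, (α * l i) • a i.castSucc)
                + (dot c d₀ - ∑ i, l i * dot (a i.castSucc) d₀) • A := by
              rw [sub_smul]; abel
      refine ⟨Fin.snoc l μ, fun i => ?_, ?_⟩
      · refine Fin.lastCases ?_ (fun j => ?_) i <;> simp [hl, hμ0]
      · apply smul_right_injective (Vec N) hα
        rw [Fin.sum_univ_castSucc]
        simp only [Fin.snoc_castSucc, Fin.snoc_last]
        rw [smul_add, Finset.smul_sum]
        simp only [smul_smul]
        exact key

/-- Farkas over an arbitrary fintype index. -/
lemma farkas {N : ℕ} {ι : Type} [Fintype ι] (a : ι → Vec N) (c : Vec N)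
    (h : ∀ d, (∀ i, dot (a i) d ≤ 0) → dot c d ≤ 0) :
    ∃ l : ι → ℝ, (∀ i, 0 ≤ l i) ∧ c = ∑ i, l i • a i := by
  set e := Fintype.equivFin ι with he
  obtain ⟨l, hl, hsum⟩ := farkas_fin (Fintype.card ι) (fun j => a (e.symm j)) c
    (fun d hd => h d (fun i => by simpa using hd (e i)))
  refine ⟨fun i => l (e i), fun i => hl _, ?_⟩
  rw [hsum]
  rw [← Equiv.sum_comp e (fun j => l j • a (e.symm j))]
  simp

/-- Gale's theorem (solvability of inhomogeneous linear inequalities). -/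
lemma gale {N : ℕ} {ι : Type} [Fintype ι] (a : ι → Vec N) (b : ι → ℝ)
    (h : ∀ l : ι → ℝ, (∀ i, 0 ≤ l i) → (∑ i, l i • a i) = 0 → 0 ≤ ∑ i, l i * b i) :
    ∃ u : Vec N, ∀ i, dot (a i) u ≤ b i := by
  by_contra hne
  push_neg at hne
  have hdot : ∀ (v : Vec N) (r : ℝ) (d : Vec (N + 1)),
      dot (Fin.snoc v r : Vec (N+1)) d = dot v (Fin.init d) + r * d (Fin.last N) := by
    intro v r d
    rw [dot, Fin.sum_univ_castSucc]
    simp [dot, Fin.init]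
  have hfar : ∀ d : Vec (N + 1),
      (∀ i, dot (Fin.snoc (a i) (-(b i)) : Vec (N+1)) d ≤ 0) →
      dot (Fin.snoc (0 : Vec N) 1 : Vec (N+1)) d ≤ 0 := by
    intro d hd
    rw [hdot]
    have h0 : dot (0 : Vec N) (Fin.init d) = 0 := by simp [dot]
    rw [h0, zero_add, one_mul]
    by_contra ht
    push_neg at ht
    obtain ⟨i, hi⟩ := hne ((1 / d (Fin.last N)) • Fin.init d)
    have hdi := hd i
    rw [hdot] at hdi
    rw [dot_smul_right] at hi
    have : dot (a i) (Fin.init d) ≤ b i * d (Fin.last N) := by linarith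
    have hlt : b i < 1 / d (Fin.last N) * dot (a i) (Fin.init d) := hi
    rw [div_mul_eq_mul_div, one_mul, lt_div_iff₀ ht] at hlt
    linarith
  obtain ⟨l, hl, hsum⟩ := farkas (fun i => (Fin.snoc (a i) (-(b i)) : Vec (N+1)))
    (Fin.snoc (0 : Vec N) 1) hfar
  have hlast := congrFun hsum (Fin.last N)
  have hinit : (∑ i, l i • a i) = 0 := by
    funext j
    have := congrFun hsum (Fin.castSucc j)
    simp only [Fin.snoc_castSucc, Finset.sum_apply, Pi.smul_apply, smul_eq_mul] at this ⊢
    linarith [this]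
  have hb : ∑ i, l i * b i = -1 := by
    simp only [Fin.snoc_last, Finset.sum_apply, Pi.smul_apply, smul_eq_mul] at hlast
    have h1 : (1 : ℝ) = ∑ i, l i * (-(b i)) := by simpa using hlast
    have h2 : ∑ i, l i * (-(b i)) = -∑ i, l i * b i := by
      rw [← Finset.sum_neg_distrib]
      exact Finset.sum_congr rfl fun i _ => by ring
    linarith [h1, h2]
  have := h l hl hinit
  rw [hb] at this
  linarith

/-- Decomposition of a vector in the polar of an intersection of two f.g. cones. -/
lemma polar_inter {N : ℕ} {ι₁ ι₂ : Type} [Fintype ι₁] [Fintype ι₂]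
    (x : ι₁ → Vec N) (y : ι₂ → Vec N) (c : Vec N)
    (h : ∀ d : Vec N, (∃ l : ι₁ → ℝ, (∀ i, 0 ≤ l i) ∧ d = ∑ i, l i • x i) →
      (∃ l : ι₂ → ℝ, (∀ i, 0 ≤ l i) ∧ d = ∑ i, l i • y i) → dot c d ≤ 0) :
    ∃ c₁ c₂ : Vec N, c = c₁ + c₂ ∧ (∀ i, dot (x i) c₁ ≤ 0) ∧ (∀ j, dot (y j) c₂ ≤ 0) := by
  have hg := gale (ι := ι₁ ⊕ ι₂) (Sum.elim x (fun j => -(y j)))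
    (Sum.elim 0 (fun j => -(dot c (y j)))) ?_
  · obtain ⟨u, hu⟩ := hg
    refine ⟨u, c - u, by abel, fun i => by simpa using hu (Sum.inl i), fun j => ?_⟩
    have := hu (Sum.inr j)
    simp only [Sum.elim_inr] at this
    rw [dot_neg_left] at this
    rw [dot_sub_right]
    have hcy : dot (y j) c = dot c (y j) := dot_comm _ _
    linarith
  · intro l hl hsum
    rw [Fintype.sum_sum_type] at hsum
    simp only [Sum.elim_inl, Sum.elim_inr, smul_neg] at hsum
    rw [Finset.sum_neg_distrib, add_neg_eq_zero] at hsum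
    set d := ∑ j, l (Sum.inr j) • y j with hd
    have hd1 : ∃ l' : ι₁ → ℝ, (∀ i, 0 ≤ l' i) ∧ d = ∑ i, l' i • x i :=
      ⟨fun i => l (Sum.inl i), fun i => hl _, hsum.symm⟩
    have hd2 : ∃ l' : ι₂ → ℝ, (∀ i, 0 ≤ l' i) ∧ d = ∑ j, l' j • y j :=
      ⟨fun j => l (Sum.inr j), fun j => hl _, rfl⟩
    have hcd := h d hd1 hd2
    rw [Fintype.sum_sum_type]
    simp only [Sum.elim_inl, Sum.elim_inr, Pi.zero_apply, mul_zero, Finset.sum_const_zero,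
      zero_add, mul_neg]
    rw [Finset.sum_neg_distrib]
    have hsum2 : dot c d = ∑ j, l (Sum.inr j) * dot c (y j) := by
      rw [hd, dot_sum_smul_right']
    linarith [hcd, hsum2]

/-- Small steps along cone directions stay in a convex set. -/
lemma step_mem {N : ℕ} {ι : Type} [Fintype ι] {C : Set (Vec N)} (hC : Convex ℝ C)
    {p : Vec N} (hp : p ∈ C) {σ : ι → Vec N} (hσ : ∀ i, σ i ∈ C) (l : ι → ℝ)
    (hl : ∀ i, 0 ≤ l i) (d : Vec N) (hd : d = ∑ i, l i • (σ i - p)) :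
    ∃ ε : ℝ, 0 < ε ∧ ∀ δ : ℝ, 0 ≤ δ → δ ≤ ε → p + δ • d ∈ C := by
  set L := ∑ i, l i with hLdef
  have hL : 0 ≤ L := Finset.sum_nonneg fun i _ => hl i
  refine ⟨1 / (L + 1), by positivity, fun δ h0 hδ => ?_⟩
  have hδL : δ * L ≤ (1 / (L + 1)) * L := mul_le_mul_of_nonneg_right hδ hL
  have hlt : (1 / (L + 1)) * L < 1 := by
    rw [div_mul_eq_mul_div, one_mul, div_lt_one (by linarith)]
    linarith
  have h1 : (0:ℝ) ≤ 1 - δ * L := by linarith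
  have hmem := hC.sum_mem (t := (Finset.univ : Finset (Option ι)))
    (w := fun o => Option.elim o (1 - δ * L) (fun i => δ * l i))
    (z := fun o => Option.elim o p σ)
    (fun o _ => by cases o with
      | none => exact h1
      | some i => exact mul_nonneg h0 (hl i))
    (by
      rw [Fintype.sum_option]
      simp only [Option.elim]
      rw [← Finset.mul_sum, ← hLdef]
      ring)
    (fun o _ => by cases o with
      | none => exact hp
      | some i => exact hσ i)
  have hexp : δ • d = (∑ i, (δ * l i) • σ i) - (δ * L) • p := by
    rw [hd, Finset.smul_sum]
    simp only [smul_smul, smul_sub]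
    rw [Finset.sum_sub_distrib, ← Finset.sum_smul, hLdef, Finset.mul_sum]
  have heq : p + δ • d = ∑ o : Option ι,
      (Option.elim o (1 - δ * L) (fun i => δ * l i)) • (Option.elim o p σ) := by
    rw [Fintype.sum_option]
    simp only [Option.elim]
    rw [hexp, sub_smul, one_smul]
    abel
  rw [heq]
  exact hmem

/-- A linear functional bounded on a finite set is bounded on its convex hull. -/
lemma hull_le {N : ℕ} (S : Finset (Vec N)) (u : Vec N) (r : ℝ)
    (h : ∀ s ∈ S, dot u s ≤ r) : ∀ y ∈ convexHull ℝ (S : Set (Vec N)), dot u y ≤ r := by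
  have hlin : IsLinearMap ℝ (dot u) :=
    ⟨fun x y => dot_add_right u x y, fun r x => dot_smul_right u r x⟩
  have hconv : Convex ℝ {y : Vec N | dot u y ≤ r} := convex_halfSpace_le hlin r
  exact fun y hy => convexHull_min (fun s hs => h s hs) hconv hy

/-- From a relative interior point one can step away from any point of the set. -/
lemma relint_step {N : ℕ} {G : Set (Vec N)} {g x : Vec N}
    (hg : g ∈ intrinsicInterior ℝ G) (hx : x ∈ G) :
    ∃ t : ℝ, 0 < t ∧ g + t • (g - x) ∈ G := by
  obtain ⟨g₀, hg₀, rfl⟩ := hg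
  have hxA : x ∈ affineSpan ℝ G := subset_affineSpan ℝ G hx
  have hmem : ∀ t : ℝ, (g₀ : Vec N) + t • ((g₀ : Vec N) - x) ∈ affineSpan ℝ G := by
    intro t
    have := (affineSpan ℝ G).smul_vsub_vadd_mem t g₀.2 hxA g₀.2
    simpa [vsub_eq_sub, vadd_eq_add, add_comm] using this
  set γ : ℝ → (affineSpan ℝ G : Set (Vec N)) :=
    fun t => ⟨(g₀ : Vec N) + t • ((g₀ : Vec N) - x), hmem t⟩ with hγ
  have hcont : Continuous γ := by
    apply Continuous.subtype_mk
    fun_prop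
  have hopen : IsOpen (γ ⁻¹' interior ((Subtype.val) ⁻¹' G)) :=
    isOpen_interior.preimage hcont
  have h0 : (0 : ℝ) ∈ γ ⁻¹' interior ((Subtype.val) ⁻¹' G) := by
    have : γ 0 = g₀ := by
      apply Subtype.ext
      simp [hγ]
    rw [Set.mem_preimage, this]
    exact hg₀
  obtain ⟨ε, hε, hball⟩ := Metric.isOpen_iff.1 hopen 0 h0
  refine ⟨ε / 2, by linarith, ?_⟩
  have hb : (ε / 2 : ℝ) ∈ Metric.ball (0:ℝ) ε := by
    simp [Real.norm_eq_abs]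
    rw [abs_of_pos (by linarith)]
    linarith
  have hmem2 : γ (ε / 2) ∈ interior ((Subtype.val) ⁻¹' G) := hball hb
  have hmem3 : γ (ε / 2) ∈ (Subtype.val) ⁻¹' G := interior_subset hmem2
  exact hmem3

/-- A functional maximized at a relative interior point of `G ⊆ P` lies in the normal cone. -/
lemma normal_of_relint_max {N : ℕ} {P G : Set (Vec N)} (hGP : G ⊆ P) {g u : Vec N}
    (hg : g ∈ intrinsicInterior ℝ G) (hmax : ∀ y ∈ P, dot u y ≤ dot u g) :
    u ∈ normalCone P G := by
  intro x hx
  refine ⟨hGP hx, fun y hy => ?_⟩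
  obtain ⟨t, ht, hmem⟩ := relint_step hg hx
  have h1 : dot u (g + t • (g - x)) ≤ dot u g := hmax _ (hGP hmem)
  rw [dot_add_right, dot_smul_right, dot_sub_right] at h1
  have h3 : dot u g ≤ dot u x := by nlinarith
  linarith [hmax y hy]

/-- Enumeration of a finite set of vectors. -/
def enum {N : ℕ} (S : Finset (Vec N)) : Fin S.card → Vec N := fun i => ↑(S.equivFin.symm i)

lemma enum_mem {N : ℕ} (S : Finset (Vec N)) (i : Fin S.card) : enum S i ∈ S :=
  (S.equivFin.symm i).2

lemma enum_surj {N : ℕ} (S : Finset (Vec N)) {s : Vec N} (hs : s ∈ S) :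
    ∃ i, enum S i = s := ⟨S.equivFin ⟨s, hs⟩, by simp [enum]⟩

lemma hull_repr {N : ℕ} (S : Finset (Vec N)) (y : Vec N)
    (hy : y ∈ convexHull ℝ (S : Set (Vec N))) :
    ∃ w : Fin S.card → ℝ, (∀ i, 0 ≤ w i) ∧ (∑ i, w i = 1) ∧ y = ∑ i, w i • enum S i := by
  rw [Finset.convexHull_eq] at hy
  obtain ⟨w, hw0, hw1, hcm⟩ := hy
  rw [Finset.centerMass_eq_of_sum_1 _ _ hw1] at hcm
  simp only [id_eq] at hcm
  have hre : ∀ (M : Type) (_ : AddCommMonoid M) (_ : Module ℝ M) (Fn : Vec N → M),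
      ∑ s ∈ S, Fn s = ∑ i, Fn (enum S i) := by
    intro M _ _ Fn
    rw [← Finset.sum_coe_sort S Fn]
    exact (Equiv.sum_comp S.equivFin.symm fun (s : S) => Fn ↑s).symm
  refine ⟨fun i => w (enum S i), fun i => hw0 _ (enum_mem S i), ?_, ?_⟩
  · rw [← hre ℝ inferInstance inferInstance w]
    exact hw1
  · rw [← hcm, hre (Vec N) inferInstance inferInstance (fun s => w s • s)]

lemma hull_repr_shift {N : ℕ} (S : Finset (Vec N)) (p y : Vec N)
    (hy : y ∈ convexHull ℝ (S : Set (Vec N))) :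
    ∃ w : Fin S.card → ℝ, (∀ i, 0 ≤ w i) ∧ y - p = ∑ i, w i • (enum S i - p) := by
  obtain ⟨w, hw0, hw1, hyw⟩ := hull_repr S y hy
  refine ⟨w, hw0, ?_⟩
  rw [hyw]
  simp only [smul_sub]
  rw [Finset.sum_sub_distrib, ← Finset.sum_smul, hw1, one_smul]

end Aux


/-- The main computation, for one reflection point. -/
lemma key_normalCone {n : ℕ} (P F G : Set (Vec n))
    (hP : IsPolytope P) (hF : IsFace P F) (hG : IsFace P G) (z : Vec n)
    (hz : z ∈ avgSet (intrinsicInterior ℝ F) (intrinsicInterior ℝ G)) :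
    normalCone (P ∩ reflP z P) (G ∩ reflP z F) =
      coneOf ((Neg.neg '' normalCone P F) ∪ normalCone P G) := by
  obtain ⟨S, hSeq⟩ := hP
  have hFP : F ⊆ P := by obtain ⟨cF, rfl⟩ := hF; exact fun x hx => hx.1
  have hGP : G ⊆ P := by obtain ⟨cG, rfl⟩ := hG; exact fun x hx => hx.1
  obtain ⟨f, hf, g, hg, hzdef⟩ := hz
  have hfF : f ∈ F := intrinsicInterior_subset hf
  have hgG : g ∈ G := intrinsicInterior_subset hg
  have h2z : (2:ℝ) • z = f + g := by rw [hzdef, smul_smul]; norm_num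
  have hS2Q : G ∩ reflP z F ⊆ P ∩ reflP z P := by
    rintro x ⟨hxG, x', hx'F, he⟩
    exact ⟨hGP hxG, ⟨x', hFP hx'F, he⟩⟩
  have hgS2 : g ∈ G ∩ reflP z F := by
    refine ⟨hgG, ⟨f, hfF, ?_⟩⟩
    show (2:ℝ) • z - f = g
    rw [h2z]; abel
  ext c
  constructor
  · -- the hard direction
    intro hc
    obtain ⟨hgQ, hmax⟩ := hc hgS2
    have hgP : g ∈ P := hgQ.1
    have hfP : f ∈ P := hFP hfF
    have hconvP : Convex ℝ P := by rw [hSeq]; exact convex_convexHull ℝ _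
    have hσP : ∀ i, enum S i ∈ P := fun i => by
      rw [hSeq]; exact subset_convexHull ℝ _ (enum_mem S i)
    -- the polar hypothesis
    have hpol : ∀ d : Vec n,
        (∃ l : Fin S.card → ℝ, (∀ i, 0 ≤ l i) ∧ d = ∑ i, l i • (enum S i - g)) →
        (∃ l : Fin S.card → ℝ, (∀ i, 0 ≤ l i) ∧ d = ∑ i, l i • (f - enum S i)) →
        dot c d ≤ 0 := by
      rintro d ⟨l, hl, hdl⟩ ⟨l', hl', hdl'⟩
      obtain ⟨ε₁, hε₁, h1⟩ := step_mem hconvP hgP hσP l hl d hdl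
      have hd2 : -d = ∑ i, l' i • (enum S i - f) := by
        rw [hdl', ← Finset.sum_neg_distrib]
        exact Finset.sum_congr rfl fun i _ => by rw [← smul_neg, neg_sub]
      obtain ⟨ε₂, hε₂, h2⟩ := step_mem hconvP hfP hσP l' hl' (-d) hd2
      set ε := min ε₁ ε₂ with hεdef
      have hε : 0 < ε := lt_min hε₁ hε₂
      have hgεP : g + ε • d ∈ P := h1 ε hε.le (min_le_left _ _)
      have hfεP : f + ε • (-d) ∈ P := h2 ε hε.le (min_le_right _ _)
      have hmem : g + ε • d ∈ P ∩ reflP z P := by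
        refine ⟨hgεP, ⟨f + ε • (-d), hfεP, ?_⟩⟩
        show (2:ℝ) • z - (f + ε • (-d)) = g + ε • d
        rw [h2z, smul_neg]
        abel
      have hle := hmax _ hmem
      rw [dot_add_right, dot_smul_right] at hle
      by_contra hpos
      push_neg at hpos
      nlinarith
    obtain ⟨c₁, c₂, hc12, h1, h2⟩ :=
      polar_inter (fun i => enum S i - g) (fun i => f - enum S i) c hpol
    have hc1g : ∀ y ∈ P, dot c₁ y ≤ dot c₁ g := by
      rw [hSeq]
      apply hull_le S c₁ (dot c₁ g)
      intro s hs
      obtain ⟨i, rfl⟩ := enum_surj S hs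
      have hi := h1 i
      rw [dot_sub_left] at hi
      have e1 : dot (enum S i) c₁ = dot c₁ (enum S i) := dot_comm _ _
      have e2 : dot g c₁ = dot c₁ g := dot_comm _ _
      linarith
    have hc2f : ∀ y ∈ P, dot (-c₂) y ≤ dot (-c₂) f := by
      rw [hSeq]
      apply hull_le S (-c₂) (dot (-c₂) f)
      intro s hs
      obtain ⟨i, rfl⟩ := enum_surj S hs
      have hi := h2 i
      rw [dot_sub_left] at hi
      have e1 : dot (enum S i) c₂ = dot c₂ (enum S i) := dot_comm _ _
      have e2 : dot f c₂ = dot c₂ f := dot_comm _ _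
      rw [dot_neg_left, dot_neg_left]
      linarith
    have hbG : c₁ ∈ normalCone P G := normal_of_relint_max hGP hg hc1g
    have haF : (-c₂) ∈ normalCone P F := normal_of_relint_max hFP hf hc2f
    refine ⟨2, ![c₂, c₁], ![1, 1], ?_, ?_, ?_⟩
    · intro i
      fin_cases i
      · exact Or.inl ⟨-c₂, haF, neg_neg c₂⟩
      · exact Or.inr hbG
    · intro i
      fin_cases i <;> norm_num
    · rw [Fin.sum_univ_two]
      simp only [Matrix.cons_val_zero, Matrix.cons_val_one, Matrix.head_cons, one_smul]
      rw [hc12]; abel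
  · -- the easy direction
    rintro ⟨k, x, l, hxmem, hl, rfl⟩
    intro t ht
    refine ⟨hS2Q ht, fun y hy => ?_⟩
    rw [dot_sum_smul_left, dot_sum_smul_left]
    apply Finset.sum_le_sum
    intro i _
    have hineq : dot (x i) y ≤ dot (x i) t := by
      rcases hxmem i with ⟨a, haF, hae⟩ | hbG
      · obtain ⟨x', hx'F, hte⟩ := ht.2
        obtain ⟨y', hy'P, hye⟩ := hy.2
        have hte' : (2:ℝ) • z - x' = t := hte
        have hye' : (2:ℝ) • z - y' = y := hye
        have ha := (haF hx'F).2 y' hy'P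
        rw [← hae, ← hte', ← hye', dot_neg_left, dot_neg_left, dot_sub_right, dot_sub_right]
        linarith
      · exact (hbG ht.1).2 y hy.1
    exact mul_le_mul_of_nonneg_left hineq (hl i)

/-- For a polytope `P ⊆ ℝⁿ`, nonempty faces `F, G` of `P` and any
`z, w ∈ (relint F + relint G)/2`, one has
`N_{P∩ρ_zP}(G ∩ ρ_z F) = N_{P∩ρ_wP}(G ∩ ρ_w F) = cone(-N_P(F) ∪ N_P(G))`. -/
theorem stmt4 {n : ℕ} (P F G : Set (Vec n))
    (hP : IsPolytope P) (hF : IsFace P F) (hG : IsFace P G)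
    (hFne : F.Nonempty) (hGne : G.Nonempty) (z w : Vec n)
    (hz : z ∈ avgSet (intrinsicInterior ℝ F) (intrinsicInterior ℝ G))
    (hw : w ∈ avgSet (intrinsicInterior ℝ F) (intrinsicInterior ℝ G)) :
    normalCone (P ∩ reflP z P) (G ∩ reflP z F) =
      coneOf ((Neg.neg '' normalCone P F) ∪ normalCone P G) ∧
    normalCone (P ∩ reflP w P) (G ∩ reflP w F) =
      coneOf ((Neg.neg '' normalCone P F) ∪ normalCone P G) := by
  exact ⟨key_normalCone P F G hP hF hG z hz, key_normalCone P F G hP hF hG w hw⟩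
end
end
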